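/- arXiv:1010.4212 — 3 statements merged into one kernel-verified Lean document; each statement's English description precedes it below -/
import Mathlib

section
/- Let M be a countable Urysohn space with finite distance set D, let l ≤ m, let E_l ⊆ E_m be finite subsets of M, and for i < s let t_i ⊆ s_i be Katětov functions with dom(t_i) = E_l, dom(s_i) = E_m, and d(t_i, t_j) = d(s_i, s_j) for all i, j. Then there exists an isometric embedding α of M into M fixing E_l pointwise such that α(x) ∈ orb(s_i) for every x ∈ orb(t_i) and every i < s. -/
/-!
Enumerate `M` and define `α` one point at a time. A new point lying in some `orb (t i)` goes to a
point of `orb (σ i)`; any two such `σ i` agree on `Em`, since `0 ∈ d(t i, t j) = d(σ i, σ j)`.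
For a free point, the distances of its image to `Em \ El` are chosen one point `w` at a time.
The constraints on the new distance come from the points already placed and from all points of
the orbits of the `t i`, which must remain placeable in the orbits of the `σ i`. They are pairwise
compatible because `d(t i, t j) = d(σ i, σ j)`, and universality of `D` makes pairwise compatible
constraints simultaneously satisfiable. The image is then realized in `M` by universality and
homogeneity.
-/

namespace Sauer

def IsMetricTriple (a b c : ℝ) : Prop := a ≤ b + c ∧ b ≤ a + c ∧ c ≤ a + b

def IsUniversalDist (D : Set ℝ) : Prop :=
  D.Finite ∧ (0 : ℝ) ∈ D ∧ (∀ d ∈ D, 0 ≤ d) ∧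
    ∀ s x₀ y₀ x₁ y₁ : ℝ, s ∈ D → x₀ ∈ D → y₀ ∈ D → x₁ ∈ D → y₁ ∈ D →
      0 < x₀ → 0 < y₀ → 0 < x₁ → 0 < y₁ →
      IsMetricTriple x₀ y₀ s → IsMetricTriple x₁ y₁ s →
      ∃ t ∈ D, 0 < t ∧ IsMetricTriple x₀ x₁ t ∧ IsMetricTriple y₀ y₁ t

open Classical in
noncomputable def dsucc (D : Set ℝ) (r : ℝ) : ℝ :=
  if ({s | s ∈ D ∧ r < s}).Nonempty then sInf {s | s ∈ D ∧ r < s} else r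

noncomputable def dpred (D : Set ℝ) (r : ℝ) : ℝ := sSup {s | s ∈ D ∧ s < r}

def IsBlock (D B : Set ℝ) : Prop :=
  ∃ (n : ℕ) (b : ℕ → ℝ),
    B = {x | ∃ i, i ≤ n ∧ x = b i} ∧
    (∀ i ≤ n, b i ∈ D) ∧ 0 < b 0 ∧
    (∀ i < n, b i < b (i + 1)) ∧
    (∀ y ∈ D, y < b 0 → 2 * y < b 0) ∧
    (∀ i < n, b (i + 1) = dsucc D (b i)) ∧
    (∀ i < n, b (i + 1) ≤ b i + b 0)

def IsJump (D : Set ℝ) (r : ℝ) : Prop := r ∈ D ∧ ∀ s ∈ D, r < s → 2 * r < s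

structure Katetov (D : Set ℝ) (M : Type) [MetricSpace M] where
  dom : Finset M
  f : M → ℝ
  mem : ∀ x ∈ dom, f x ∈ D
  pos : ∀ x ∈ dom, 0 < f x
  ineq1 : ∀ x ∈ dom, ∀ y ∈ dom, |f x - f y| ≤ dist x y
  ineq2 : ∀ x ∈ dom, ∀ y ∈ dom, dist x y ≤ f x + f y

variable {D : Set ℝ} {M : Type} [MetricSpace M]

def orb (t : Katetov D M) : Set M :=
  {y | y ∉ t.dom ∧ ∀ x ∈ t.dom, dist y x = t.f x}

noncomputable def rank (t : Katetov D M) : ℝ := sInf (t.f '' ↑t.dom)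

def orbDistSet (s t : Katetov D M) : Set ℝ :=
  {m | ∃ x ∈ orb s, ∃ y ∈ orb t, dist x y = m}

noncomputable def dminK (s t : Katetov D M) : ℝ := sInf (orbDistSet s t)

noncomputable def dmin (A B : Set M) : ℝ := sInf {d | ∃ x ∈ A, ∃ y ∈ B, dist x y = d}

def IsHomogeneous (M : Type) [MetricSpace M] : Prop :=
  ∀ (A : Finset M) (f : M → M),
    (∀ x ∈ A, ∀ y ∈ A, dist (f x) (f y) = dist x y) →
    ∃ g : M ≃ᵢ M, ∀ x ∈ A, g x = f x

def IsUrysohn (D : Set ℝ) (M : Type) [MetricSpace M] : Prop :=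
  Countable M ∧ (∀ x y : M, dist x y ∈ D) ∧ IsHomogeneous M ∧
    ∀ (N : Type) [MetricSpace N], Finite N → (∀ x y : N, dist x y ∈ D) →
      ∃ f : N → M, Isometry f

namespace IsMetricTriple

theorem swap_left {a b c : ℝ} (h : IsMetricTriple a b c) : IsMetricTriple b a c :=
  ⟨h.2.1, h.1, by linarith [h.2.2]⟩

theorem swap_right {a b c : ℝ} (h : IsMetricTriple a b c) : IsMetricTriple a c b :=
  ⟨by linarith [h.1], h.2.2, h.2.1⟩

theorem swap_outer {a b c : ℝ} (h : IsMetricTriple a b c) : IsMetricTriple c b a :=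
  h.swap_left.swap_right.swap_left

theorem eq_of_right_eq_zero {a b : ℝ} (h : IsMetricTriple a b 0) : a = b := by
  obtain ⟨h₁, h₂, -⟩ := h
  linarith

end IsMetricTriple

theorem isMetricTriple_iff_abs_sub_le {a b c : ℝ} :
    IsMetricTriple a b c ↔ |a - b| ≤ c ∧ c ≤ a + b := by
  rw [abs_sub_le_iff]
  exact ⟨fun ⟨h₁, h₂, h₃⟩ => ⟨⟨by linarith, by linarith⟩, h₃⟩,
    fun ⟨⟨h₁, h₂⟩, h₃⟩ => ⟨by linarith, by linarith, h₃⟩⟩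

theorem isMetricTriple_self {a : ℝ} (h : 0 ≤ a) : IsMetricTriple a a 0 :=
  ⟨by linarith, by linarith, by linarith⟩

theorem isMetricTriple_dist (x y z : M) : IsMetricTriple (dist x z) (dist y z) (dist x y) :=
  ⟨by linarith [dist_triangle x y z], by linarith [dist_triangle y x z, dist_comm x y],
    by linarith [dist_triangle x z y, dist_comm y z]⟩

theorem Katetov.isMetricTriple (q : Katetov D M) {z w : M} (hz : z ∈ q.dom) (hw : w ∈ q.dom) :
    IsMetricTriple (q.f z) (q.f w) (dist z w) :=
  isMetricTriple_iff_abs_sub_le.2 ⟨q.ineq1 z hz w hw, q.ineq2 z hz w hw⟩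

theorem isMetricTriple_of_mem_orbDistSet {q q' : Katetov D M} {m : ℝ} (hm : m ∈ orbDistSet q q')
    {z : M} (hz : z ∈ q.dom) (hz' : z ∈ q'.dom) : IsMetricTriple (q.f z) (q'.f z) m := by
  obtain ⟨a, ha, b, hb, rfl⟩ := hm
  rw [← ha.2 z hz, ← hb.2 z hz']
  exact isMetricTriple_dist a b z

namespace Katetov

/-- `q.dom` together with a new point `none` at distance `q.f z` from each `z ∈ q.dom`. -/
abbrev Extension (q : Katetov D M) : Type := Option q.dom

variable (q : Katetov D M)

noncomputable def extensionDist : q.Extension → q.Extension → ℝ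
  | some a, some b => dist a.1 b.1
  | some a, none => q.f a
  | none, some b => q.f b
  | none, none => 0

noncomputable instance : MetricSpace q.Extension where
  dist := q.extensionDist
  dist_self := by rintro (_ | a) <;> simp [extensionDist]
  dist_comm := by rintro (_ | a) (_ | b) <;> simp [extensionDist, dist_comm]
  dist_triangle := by
    rintro (_ | a) (_ | b) (_ | c) <;> simp only [extensionDist]
    · simp
    · simp
    · linarith [q.pos b b.2]
    · linarith [(q.isMetricTriple c.2 b.2).1, dist_comm b.1 c.1]
    · simp
    · exact (q.isMetricTriple a.2 c.2).2.2
    · linarith [(q.isMetricTriple a.2 b.2).1]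
    · exact dist_triangle a.1 b.1 c.1
  eq_of_dist_eq_zero := by
    rintro (_ | a) (_ | b) h
    · rfl
    · exact absurd h.symm (q.pos b b.2).ne
    · exact absurd h.symm (q.pos a a.2).ne
    · exact congrArg some (Subtype.ext (dist_eq_zero.mp h))

theorem dist_extension_mem (hD₀ : (0 : ℝ) ∈ D) (hdist : ∀ x y : M, dist x y ∈ D)
    (a b : q.Extension) : dist a b ∈ D := by
  rcases a with _ | a <;> rcases b with _ | b
  exacts [hD₀, q.mem b b.2, q.mem a a.2, hdist a b]

/-- Embed `q.Extension` into `M`, then move the copy of `q.dom` back onto `q.dom` by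
homogeneity. -/
theorem orb_nonempty (hD₀ : (0 : ℝ) ∈ D) (hM : IsUrysohn D M) : (orb q).Nonempty := by
  classical
  obtain ⟨-, hdist, hhom, huniv⟩ := hM
  obtain ⟨e, he⟩ := huniv q.Extension inferInstance (q.dist_extension_mem hD₀ hdist)
  have hinj : Function.Injective fun b : q.dom => e (some b) :=
    fun _ _ hab => Option.some_injective _ (he.injective hab)
  set back := Function.extend (fun b : q.dom => e (some b)) Subtype.val id
  have hback (b : q.dom) : back (e (some b)) = b := hinj.extend_apply _ _ b
  obtain ⟨g, hg⟩ := hhom (Finset.univ.image fun b : q.dom => e (some b)) back <| by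
    simp only [Finset.mem_image, Finset.mem_univ, true_and]
    rintro _ ⟨a, rfl⟩ _ ⟨b, rfl⟩
    rw [hback, hback, he.dist_eq]
    rfl
  have hgb (b : q.dom) : g (e (some b)) = b := by
    rw [hg _ (Finset.mem_image_of_mem _ (Finset.mem_univ b)), hback]
  have hdist_f : ∀ z ∈ q.dom, dist (g (e none)) z = q.f z := fun z hz =>
    calc dist (g (e none)) z = dist (g (e none)) (g (e (some ⟨z, hz⟩))) := by rw [hgb]
      _ = q.f z := by rw [g.dist_eq, he.dist_eq]; rfl
  refine ⟨g (e none), fun hmem => ?_, hdist_f⟩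
  have := hdist_f _ hmem
  rw [dist_self] at this
  exact (q.pos _ hmem).ne this

end Katetov

theorem exists_forall_dist_eq (hD₀ : (0 : ℝ) ∈ D) (hM : IsUrysohn D M) {ι : Type*} [Finite ι]
    (φ : ι → M) (k : ι → ℝ) (hk : ∀ i, k i ∈ D ∧ 0 < k i)
    (htri : ∀ i j, IsMetricTriple (k i) (k j) (dist (φ i) (φ j))) :
    ∃ y, ∀ i, dist y (φ i) = k i := by
  classical
  set F : M → ℝ := fun y => if h : ∃ i, φ i = y then k h.choose else 0
  have hF (i : ι) : F (φ i) = k i := by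
    have h : ∃ j, φ j = φ i := ⟨i, rfl⟩
    have := htri h.choose i
    rw [h.choose_spec, dist_self] at this
    simp only [F, dif_pos h]
    exact this.eq_of_right_eq_zero
  have hdom : ∀ y ∈ (Set.finite_range φ).toFinset, ∃ i, y = φ i := by
    simp [eq_comm]
  let q : Katetov D M :=
    { dom := (Set.finite_range φ).toFinset
      f := F
      mem := fun y hy => by obtain ⟨i, rfl⟩ := hdom y hy; exact hF i ▸ (hk i).1
      pos := fun y hy => by obtain ⟨i, rfl⟩ := hdom y hy; exact hF i ▸ (hk i).2
      ineq1 := fun y hy y' hy' => by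
        obtain ⟨i, rfl⟩ := hdom y hy; obtain ⟨j, rfl⟩ := hdom y' hy'
        rw [hF, hF]; exact (isMetricTriple_iff_abs_sub_le.1 (htri i j)).1
      ineq2 := fun y hy y' hy' => by
        obtain ⟨i, rfl⟩ := hdom y hy; obtain ⟨j, rfl⟩ := hdom y' hy'
        rw [hF, hF]; exact (htri i j).2.2 }
  obtain ⟨y, -, hy⟩ := q.orb_nonempty hD₀ hM
  exact ⟨y, fun i => (hy (φ i) (by simp [q])).trans (hF i)⟩

/-- `c` and `c'` are the distances of two witnesses to two points `x` and `w`; the witnesses can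
be put at a common distance `u ∈ D` from each other. -/
def Compatible (D : Set ℝ) (c c' : ℝ × ℝ) : Prop :=
  ∃ u ∈ D, IsMetricTriple c.1 c'.1 u ∧ IsMetricTriple c.2 c'.2 u

theorem Compatible.symm {c c' : ℝ × ℝ} (h : Compatible D c c') : Compatible D c' c := by
  obtain ⟨u, hu, h₁, h₂⟩ := h
  exact ⟨u, hu, h₁.swap_left, h₂.swap_left⟩

/-- A Helly property of universal distance sets: it suffices to satisfy the witness achieving
the largest `|c.1 - c.2|` and the one achieving the smallest `c.1 + c.2`. -/
theorem IsUniversalDist.exists_forall_isMetricTriple (hD : IsUniversalDist D) {d : ℝ} (hd : d ∈ D)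
    (hdpos : 0 < d) {C : Set (ℝ × ℝ)} (hCD : ∀ c ∈ C, c.1 ∈ D ∧ 0 < c.1 ∧ c.2 ∈ D ∧ 0 < c.2)
    (hcompat : ∀ c ∈ C, ∀ c' ∈ C, Compatible D c c') :
    ∃ v ∈ D, 0 < v ∧ ∀ c ∈ C, IsMetricTriple c.1 c.2 v := by
  rcases C.eq_empty_or_nonempty with rfl | hC
  · exact ⟨d, hd, hdpos, fun _ h => h.elim⟩
  have hfin : C.Finite := (hD.1.prod hD.1).subset fun c hc => ⟨(hCD c hc).1, (hCD c hc).2.2.1⟩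
  obtain ⟨c₀, hc₀, hmax⟩ := Set.exists_max_image C (fun c => |c.1 - c.2|) hfin hC
  obtain ⟨c₁, hc₁, hmin⟩ := Set.exists_min_image C (fun c => c.1 + c.2) hfin hC
  obtain ⟨u, hu, h₁, h₂⟩ := hcompat c₀ hc₀ c₁ hc₁
  obtain ⟨m₀, p₀, m₀', p₀'⟩ := hCD c₀ hc₀
  obtain ⟨m₁, p₁, m₁', p₁'⟩ := hCD c₁ hc₁
  obtain ⟨v, hv, hvpos, hv₀, hv₁⟩ :=
    hD.2.2.2 u c₀.1 c₁.1 c₀.2 c₁.2 hu m₀ m₁ m₀' m₁' p₀ p₁ p₀' p₁' h₁ h₂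
  refine ⟨v, hv, hvpos, fun c hc => isMetricTriple_iff_abs_sub_le.2 ⟨?_, ?_⟩⟩
  · exact (hmax c hc).trans (isMetricTriple_iff_abs_sub_le.1 hv₀).1
  · exact hv₁.2.2.trans (hmin c hc)

theorem exists_eqOn_of_forall_exists_extend {α β : Type*} {S : ℕ → Set α} (hS : Monotone S)
    (hcover : ∀ a, ∃ n, a ∈ S n) {P : ℕ → (α → β) → Prop} (h₀ : ∃ f, P 0 f)
    (hstep : ∀ n f, P n f → ∃ f', P (n + 1) f' ∧ Set.EqOn f' f (S n)) :
    ∃ g : α → β, ∀ n, ∃ f, P n f ∧ Set.EqOn g f (S n) := by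
  classical
  choose F hF using hstep
  let seq : (n : ℕ) → {f // P n f} :=
    fun n => Nat.rec ⟨h₀.choose, h₀.choose_spec⟩ (fun n g => ⟨F n g.1 g.2, (hF n g.1 g.2).1⟩) n
  have hseq : ∀ m n, m ≤ n → Set.EqOn (seq n).1 (seq m).1 (S m) := by
    intro m n hmn
    induction n, hmn using Nat.le_induction with
    | base => exact Set.eqOn_refl _ _
    | succ n hmn ih => exact ((hF n _ (seq n).2).2.mono (hS hmn)).trans ih
  refine ⟨fun a => (seq (Nat.find (hcover a))).1 a, fun n => ⟨(seq n).1, (seq n).2, ?_⟩⟩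
  intro a ha
  exact (hseq _ n (Nat.find_min' (hcover a) ha) (Nat.find_spec (hcover a))).symm

section Amalgamation

variable {s : ℕ} {El Em : Finset M} {t σ : Fin s → Katetov D M}

structure IsOrbitExtension (El Em : Finset M) (t σ : Fin s → Katetov D M) : Prop where
  subset : El ⊆ Em
  dom_t : ∀ i, (t i).dom = El
  dom_σ : ∀ i, (σ i).dom = Em
  ext : ∀ i, ∀ x ∈ El, (σ i).f x = (t i).f x
  orbDistSet_eq : ∀ i j, orbDistSet (t i) (t j) = orbDistSet (σ i) (σ j)

namespace IsOrbitExtension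

theorem dist_eq_of_mem_orb (h : IsOrbitExtension El Em t σ) {i : Fin s} {y : M}
    (hy : y ∈ orb (t i)) {z : M} (hz : z ∈ El) : dist y z = (σ i).f z := by
  rw [h.ext i z hz, hy.2 z (h.dom_t i ▸ hz)]

theorem isMetricTriple_σ (h : IsOrbitExtension El Em t σ) (i : Fin s) {z w : M} (hz : z ∈ Em)
    (hw : w ∈ Em) : IsMetricTriple ((σ i).f z) ((σ i).f w) (dist z w) :=
  (σ i).isMetricTriple (h.dom_σ i ▸ hz) (h.dom_σ i ▸ hw)

theorem isMetricTriple_of_mem_orb (h : IsOrbitExtension El Em t σ) {i j : Fin s} {y y' : M}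
    (hy : y ∈ orb (t i)) (hy' : y' ∈ orb (t j)) {z : M} (hz : z ∈ Em) :
    IsMetricTriple ((σ i).f z) ((σ j).f z) (dist y y') :=
  isMetricTriple_of_mem_orbDistSet (h.orbDistSet_eq i j ▸ ⟨y, hy, y', hy', rfl⟩)
    (h.dom_σ i ▸ hz) (h.dom_σ j ▸ hz)

theorem f_eq_of_mem_orb (h : IsOrbitExtension El Em t σ) {i j : Fin s} {y : M}
    (hi : y ∈ orb (t i)) (hj : y ∈ orb (t j)) {z : M} (hz : z ∈ Em) : (σ i).f z = (σ j).f z := by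
  have := h.isMetricTriple_of_mem_orb hi hj hz
  rw [dist_self] at this
  exact this.eq_of_right_eq_zero

end IsOrbitExtension

/-- Invariant of the construction of the embedding; `S` is the finite set of points already
placed. -/
structure IsGoodMap (El Em : Finset M) (t σ : Fin s → Katetov D M) (S : Finset M)
    (f : M → M) : Prop where
  subset : El ⊆ S
  map_eq_self : ∀ x ∈ El, f x = x
  dist_eq : ∀ x ∈ S, ∀ y ∈ S, dist (f x) (f y) = dist x y
  map_notMem : ∀ x ∈ S, x ∉ El → f x ∉ Em
  mem_orb : ∀ x ∈ S, ∀ i, x ∈ orb (t i) → f x ∈ orb (σ i)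
  /-- every point `y ∈ orb (t i)` not yet treated can still be sent into `orb (σ i)` -/
  compat : ∀ u ∈ S, ∀ i, ∀ y ∈ orb (t i), ∀ z ∈ Em,
    IsMetricTriple ((σ i).f z) (dist (f u) z) (dist y u)

theorem IsOrbitExtension.isGoodMap_id (h : IsOrbitExtension El Em t σ) :
    IsGoodMap El Em t σ El id where
  subset := subset_rfl
  map_eq_self _ _ := rfl
  dist_eq _ _ _ _ := rfl
  map_notMem _ hx hx' := (hx' hx).elim
  mem_orb x hx i hxi := ((h.dom_t i ▸ hxi.1) hx).elim
  compat u hu i y hy z hz := by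
    rw [id, h.dist_eq_of_mem_orb hy hu, dist_comm u z]
    exact (h.isMetricTriple_σ i hz (h.subset hu)).swap_right

/-- `p` is a possible choice of the distances from the image of a new point `x` to the points
of `T`, given the images `f u` of the points `u ∈ S`. -/
structure IsAdmissible (t σ : Fin s → Katetov D M) (S : Finset M) (f : M → M) (x : M)
    (T : Finset M) (p : M → ℝ) : Prop where
  mem : ∀ z ∈ T, p z ∈ D
  pos : ∀ z ∈ T, 0 < p z
  isMetricTriple : ∀ z ∈ T, ∀ z' ∈ T, IsMetricTriple (p z) (p z') (dist z z')
  isMetricTriple_image : ∀ u ∈ S, ∀ z ∈ T, IsMetricTriple (p z) (dist (f u) z) (dist x u)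
  isMetricTriple_orb : ∀ i, ∀ y ∈ orb (t i), ∀ z ∈ T,
    IsMetricTriple (p z) ((σ i).f z) (dist y x)

variable {S T : Finset M} {f : M → M} {x : M} {p : M → ℝ}

theorem IsOrbitExtension.isAdmissible_of_mem_orb (h : IsOrbitExtension El Em t σ)
    (hf : IsGoodMap El Em t σ S f) {i : Fin s} (hx : x ∈ orb (t i)) :
    IsAdmissible t σ S f x Em (σ i).f where
  mem z hz := (σ i).mem z (h.dom_σ i ▸ hz)
  pos z hz := (σ i).pos z (h.dom_σ i ▸ hz)
  isMetricTriple _ hz _ hz' := h.isMetricTriple_σ i hz hz'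
  isMetricTriple_image u hu z hz := hf.compat u hu i x hx z hz
  isMetricTriple_orb _ _ hy _ hz := (h.isMetricTriple_of_mem_orb hy hx hz).swap_left

theorem IsOrbitExtension.isAdmissible_dist (h : IsOrbitExtension El Em t σ)
    (hdist : ∀ x y : M, dist x y ∈ D) (hf : IsGoodMap El Em t σ S f) (hxS : x ∉ S) :
    IsAdmissible t σ S f x El (dist x ·) where
  mem z _ := hdist x z
  pos z hz := dist_pos.2 fun hxz => hxS (hxz ▸ hf.subset hz)
  isMetricTriple z _ z' _ := by
    simpa only [dist_comm x] using isMetricTriple_dist z z' x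
  isMetricTriple_image u hu z hz := by
    rw [show dist (f u) z = dist u z by
      rw [← hf.dist_eq u hu z (hf.subset hz), hf.map_eq_self z hz]]
    exact isMetricTriple_dist x u z
  isMetricTriple_orb i y hy z hz := by
    rw [← h.dist_eq_of_mem_orb hy hz, dist_comm y x]
    exact isMetricTriple_dist x y z

/-- The constraints on the distance between the image of `x` and a new point `w`: each pair
records the distances of some point, actual or still to be placed, to the image of `x` and to
`w`. -/
def witnessSet (t σ : Fin s → Katetov D M) (S : Finset M) (f : M → M) (x : M) (T : Finset M)
    (p : M → ℝ) (w : M) : Set (ℝ × ℝ) :=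
  {c | (∃ z ∈ T, c = (p z, dist z w)) ∨ (∃ u ∈ S, c = (dist x u, dist (f u) w)) ∨
    ∃ i, ∃ y ∈ orb (t i), c = (dist y x, (σ i).f w)}

variable {w : M}

theorem IsOrbitExtension.mem_witnessSet (h : IsOrbitExtension El Em t σ)
    (hdist : ∀ x y : M, dist x y ∈ D) (hf : IsGoodMap El Em t σ S f) (hxS : x ∉ S)
    (hfree : ∀ i, x ∉ orb (t i)) (hp : IsAdmissible t σ S f x T p) (hElT : El ⊆ T)
    (hw : w ∈ Em) (hwT : w ∉ T) :
    ∀ c ∈ witnessSet t σ S f x T p w, c.1 ∈ D ∧ 0 < c.1 ∧ c.2 ∈ D ∧ 0 < c.2 := by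
  rintro _ (⟨z, hz, rfl⟩ | ⟨u, hu, rfl⟩ | ⟨i, y, hy, rfl⟩)
  · exact ⟨hp.mem z hz, hp.pos z hz, hdist z w, dist_pos.2 fun hzw => hwT (hzw ▸ hz)⟩
  · refine ⟨hdist x u, dist_pos.2 fun hxu => hxS (hxu ▸ hu), hdist _ w, dist_pos.2 fun hfu => ?_⟩
    by_cases huEl : u ∈ El
    · exact hwT (by rw [← hfu, hf.map_eq_self u huEl]; exact hElT huEl)
    · exact hf.map_notMem u hu huEl (hfu ▸ hw)
  · exact ⟨hdist y x, dist_pos.2 fun hyx => hfree i (hyx ▸ hy),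
      (σ i).mem w (h.dom_σ i ▸ hw), (σ i).pos w (h.dom_σ i ▸ hw)⟩

theorem IsOrbitExtension.compatible_of_mem_witnessSet (h : IsOrbitExtension El Em t σ)
    (hdist : ∀ x y : M, dist x y ∈ D) (hf : IsGoodMap El Em t σ S f)
    (hp : IsAdmissible t σ S f x T p) (hTEm : T ⊆ Em) (hw : w ∈ Em) :
    ∀ c ∈ witnessSet t σ S f x T p w, ∀ c' ∈ witnessSet t σ S f x T p w, Compatible D c c' := by
  have hTT : ∀ z ∈ T, ∀ z' ∈ T, Compatible D (p z, dist z w) (p z', dist z' w) :=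
    fun z hz z' hz' => ⟨dist z z', hdist z z', hp.isMetricTriple z hz z' hz',
      isMetricTriple_dist z z' w⟩
  have hTS : ∀ z ∈ T, ∀ u ∈ S, Compatible D (p z, dist z w) (dist x u, dist (f u) w) :=
    fun z hz u hu => ⟨dist z (f u), hdist z (f u),
      dist_comm z (f u) ▸ (hp.isMetricTriple_image u hu z hz).swap_right,
      isMetricTriple_dist z (f u) w⟩
  have hTO : ∀ z ∈ T, ∀ i, ∀ y ∈ orb (t i),
      Compatible D (p z, dist z w) (dist y x, (σ i).f w) :=
    fun z hz i y hy => ⟨(σ i).f z, (σ i).mem z (h.dom_σ i ▸ hTEm hz),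
      (hp.isMetricTriple_orb i y hy z hz).swap_right,
      (h.isMetricTriple_σ i (hTEm hz) hw).swap_outer⟩
  have hSS : ∀ u ∈ S, ∀ u' ∈ S,
      Compatible D (dist x u, dist (f u) w) (dist x u', dist (f u') w) :=
    fun u hu u' hu' => ⟨dist u u', hdist u u',
      by simpa only [dist_comm x] using isMetricTriple_dist u u' x,
      hf.dist_eq u hu u' hu' ▸ isMetricTriple_dist (f u) (f u') w⟩
  have hSO : ∀ u ∈ S, ∀ i, ∀ y ∈ orb (t i),
      Compatible D (dist x u, dist (f u) w) (dist y x, (σ i).f w) :=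
    fun u hu i y hy => ⟨dist y u, hdist y u,
      dist_comm x y ▸ (isMetricTriple_dist x y u).swap_right,
      (hf.compat u hu i y hy w hw).swap_left⟩
  have hOO : ∀ i, ∀ y ∈ orb (t i), ∀ j, ∀ y' ∈ orb (t j),
      Compatible D (dist y x, (σ i).f w) (dist y' x, (σ j).f w) :=
    fun i y hy j y' hy' => ⟨dist y y', hdist y y', isMetricTriple_dist y y' x,
      h.isMetricTriple_of_mem_orb hy hy' hw⟩
  rintro _ (⟨z, hz, rfl⟩ | ⟨u, hu, rfl⟩ | ⟨i, y, hy, rfl⟩)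
    _ (⟨z', hz', rfl⟩ | ⟨u', hu', rfl⟩ | ⟨j, y', hy', rfl⟩)
  exacts [hTT z hz z' hz', hTS z hz u' hu', hTO z hz j y' hy', (hTS z' hz' u hu).symm,
    hSS u hu u' hu', hSO u hu j y' hy', (hTO z' hz' i y hy).symm, (hSO u' hu' i y hy).symm,
    hOO i y hy j y' hy']

theorem IsOrbitExtension.exists_isAdmissible_insert [DecidableEq M] [NeZero s]
    (hD : IsUniversalDist D) (h : IsOrbitExtension El Em t σ) (hdist : ∀ x y : M, dist x y ∈ D)
    (hf : IsGoodMap El Em t σ S f) (hxS : x ∉ S) (hfree : ∀ i, x ∉ orb (t i))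
    (hp : IsAdmissible t σ S f x T p) (hElT : El ⊆ T) (hTEm : T ⊆ Em) (hw : w ∈ Em)
    (hwT : w ∉ T) : ∃ v, IsAdmissible t σ S f x (insert w T) (Function.update p w v) := by
  obtain ⟨v, hv, hvpos, hvC⟩ := hD.exists_forall_isMetricTriple
    ((σ 0).mem w (h.dom_σ 0 ▸ hw)) ((σ 0).pos w (h.dom_σ 0 ▸ hw))
    (h.mem_witnessSet hdist hf hxS hfree hp hElT hw hwT)
    (h.compatible_of_mem_witnessSet hdist hf hp hTEm hw)
  have hupd : ∀ z ∈ T, Function.update p w v z = p z := fun z hz =>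
    Function.update_of_ne (ne_of_mem_of_not_mem hz hwT) _ _
  have hvT : ∀ z ∈ T, IsMetricTriple v (p z) (dist w z) := fun z hz =>
    dist_comm z w ▸ (hvC _ (Or.inl ⟨z, hz, rfl⟩)).swap_outer.swap_right
  refine ⟨v, ⟨?_, ?_, ?_, ?_, ?_⟩⟩ <;> simp only [Finset.forall_mem_insert, Function.update_self]
  · exact ⟨hv, fun z hz => hupd z hz ▸ hp.mem z hz⟩
  · exact ⟨hvpos, fun z hz => hupd z hz ▸ hp.pos z hz⟩
  · refine ⟨⟨dist_self w ▸ isMetricTriple_self hvpos.le, fun z hz => hupd z hz ▸ hvT z hz⟩,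
      fun z hz => ⟨?_, fun z' hz' => ?_⟩⟩
    · rw [hupd z hz, dist_comm]
      exact (hvT z hz).swap_left
    · rw [hupd z hz, hupd z' hz']
      exact hp.isMetricTriple z hz z' hz'
  · exact fun u hu => ⟨(hvC _ (Or.inr (Or.inl ⟨u, hu, rfl⟩))).swap_outer,
      fun z hz => hupd z hz ▸ hp.isMetricTriple_image u hu z hz⟩
  · exact fun i y hy => ⟨(hvC _ (Or.inr (Or.inr ⟨i, y, hy, rfl⟩))).swap_outer,
      fun z hz => hupd z hz ▸ hp.isMetricTriple_orb i y hy z hz⟩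

theorem IsOrbitExtension.exists_isAdmissible_of_forall_notMem_orb [DecidableEq M] [NeZero s]
    (hD : IsUniversalDist D) (h : IsOrbitExtension El Em t σ) (hdist : ∀ x y : M, dist x y ∈ D)
    (hf : IsGoodMap El Em t σ S f) (hxS : x ∉ S) (hfree : ∀ i, x ∉ orb (t i)) :
    ∃ p, IsAdmissible t σ S f x Em p := by
  obtain ⟨p, hp⟩ : ∃ p, IsAdmissible t σ S f x (El ∪ Em) p := by
    refine Finset.induction_on' Em
      ⟨_, (Finset.union_empty El).symm ▸ h.isAdmissible_dist hdist hf hxS⟩ ?_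
    rintro w B hw hB hwB ⟨p, hp⟩
    rw [Finset.union_insert]
    by_cases hwEl : w ∈ El
    · exact ⟨p, (Finset.insert_eq_of_mem (Finset.mem_union_left B hwEl)).symm ▸ hp⟩
    · obtain ⟨v, hv⟩ := h.exists_isAdmissible_insert hD hdist hf hxS hfree hp
        Finset.subset_union_left (Finset.union_subset h.subset hB) hw (by simp [hwEl, hwB])
      exact ⟨_, hv⟩
  exact ⟨p, Finset.union_eq_right.2 h.subset ▸ hp⟩

theorem IsAdmissible.exists_image (hD₀ : (0 : ℝ) ∈ D) (hM : IsUrysohn D M)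
    (hf : IsGoodMap El Em t σ S f) (hxS : x ∉ S) (hp : IsAdmissible t σ S f x Em p) :
    ∃ y, (∀ z ∈ Em, dist y z = p z) ∧ ∀ u ∈ S, dist y (f u) = dist x u := by
  obtain ⟨y, hy⟩ := exists_forall_dist_eq hD₀ hM (ι := Em ⊕ S)
    (Sum.elim (fun z => z) (fun u => f u)) (Sum.elim (fun z => p z) (fun u => dist x u))
    (by
      rintro (⟨z, hz⟩ | ⟨u, hu⟩)
      · exact ⟨hp.mem z hz, hp.pos z hz⟩
      · exact ⟨hM.2.1 x u, dist_pos.2 fun hxu => hxS (hxu ▸ hu)⟩)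
    (by
      rintro (⟨z, hz⟩ | ⟨u, hu⟩) (⟨z', hz'⟩ | ⟨u', hu'⟩) <;>
        simp only [Sum.elim_inl, Sum.elim_inr]
      · exact hp.isMetricTriple z hz z' hz'
      · exact dist_comm (f u') z ▸ (hp.isMetricTriple_image u' hu' z hz).swap_right
      · exact (hp.isMetricTriple_image u hu z' hz').swap_outer.swap_right
      · rw [hf.dist_eq u hu u' hu']
        simpa only [dist_comm x] using isMetricTriple_dist u u' x)
  exact ⟨y, fun z hz => hy (.inl ⟨z, hz⟩), fun u hu => hy (.inr ⟨u, hu⟩)⟩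

theorem IsGoodMap.update [DecidableEq M] (h : IsOrbitExtension El Em t σ)
    (hf : IsGoodMap El Em t σ S f) (hxS : x ∉ S) (hp : IsAdmissible t σ S f x Em p)
    (horb : ∀ i, x ∈ orb (t i) → ∀ z ∈ Em, p z = (σ i).f z) {y : M}
    (hyEm : ∀ z ∈ Em, dist y z = p z) (hyS : ∀ u ∈ S, dist y (f u) = dist x u) :
    IsGoodMap El Em t σ (insert x S) (Function.update f x y) := by
  have hupd : ∀ u ∈ S, Function.update f x y u = f u := fun u hu =>
    Function.update_of_ne (ne_of_mem_of_not_mem hu hxS) _ _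
  have hyEm' : y ∉ Em := fun hy => (hp.pos y hy).ne' (hyEm y hy ▸ dist_self y)
  refine ⟨hf.subset.trans (Finset.subset_insert x S),
    fun z hz => (hupd z (hf.subset hz)).trans (hf.map_eq_self z hz), ?_, ?_, ?_, ?_⟩ <;>
    simp only [Finset.forall_mem_insert, Function.update_self]
  · refine ⟨⟨by rw [dist_self, dist_self], fun b hb => ?_⟩, fun a ha => ⟨?_, fun b hb => ?_⟩⟩
    · rw [hupd b hb, hyS b hb]
    · rw [hupd a ha, dist_comm, hyS a ha, dist_comm]
    · rw [hupd a ha, hupd b hb, hf.dist_eq a ha b hb]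
  · exact ⟨fun _ => hyEm', fun a ha haEl => hupd a ha ▸ hf.map_notMem a ha haEl⟩
  · refine ⟨fun i hi => ⟨h.dom_σ i ▸ hyEm', fun z hz => ?_⟩,
      fun a ha i hai => hupd a ha ▸ hf.mem_orb a ha i hai⟩
    rw [h.dom_σ i] at hz
    rw [hyEm z hz, horb i hi z hz]
  · refine ⟨fun i y' hy' z hz => ?_, fun a ha => hupd a ha ▸ hf.compat a ha⟩
    rw [hyEm z hz]
    exact (hp.isMetricTriple_orb i y' hy' z hz).swap_left

theorem IsGoodMap.exists_extend [DecidableEq M] [NeZero s] (hD : IsUniversalDist D)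
    (hM : IsUrysohn D M) (h : IsOrbitExtension El Em t σ) (hf : IsGoodMap El Em t σ S f)
    (x : M) : ∃ f', IsGoodMap El Em t σ (insert x S) f' ∧ ∀ u ∈ S, f' u = f u := by
  by_cases hxS : x ∈ S
  · exact ⟨f, (Finset.insert_eq_of_mem hxS).symm ▸ hf, fun _ _ => rfl⟩
  obtain ⟨p, hp, horb⟩ : ∃ p, IsAdmissible t σ S f x Em p ∧
      ∀ i, x ∈ orb (t i) → ∀ z ∈ Em, p z = (σ i).f z := by
    by_cases hx : ∃ i, x ∈ orb (t i)
    · obtain ⟨i, hi⟩ := hx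
      exact ⟨_, h.isAdmissible_of_mem_orb hf hi, fun j hj z hz => h.f_eq_of_mem_orb hi hj hz⟩
    · obtain ⟨p, hp⟩ :=
        h.exists_isAdmissible_of_forall_notMem_orb hD hM.2.1 hf hxS (not_exists.1 hx)
      exact ⟨p, hp, fun i hi => (hx ⟨i, hi⟩).elim⟩
  obtain ⟨y, hyEm, hyS⟩ := hp.exists_image hD.2.1 hM hf hxS
  exact ⟨_, hf.update h hxS hp horb hyEm hyS, fun u hu =>
    Function.update_of_ne (ne_of_mem_of_not_mem hu hxS) _ _⟩

theorem IsOrbitExtension.exists_eqOn_isGoodMap [DecidableEq M] [NeZero s] [Nonempty M]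
    (hD : IsUniversalDist D) (hM : IsUrysohn D M) (h : IsOrbitExtension El Em t σ) :
    ∃ α : M → M, ∀ a b : M, ∃ S f, IsGoodMap El Em t σ S f ∧ a ∈ S ∧ b ∈ S ∧ Set.EqOn α f S := by
  have := hM.1
  obtain ⟨e, he⟩ := exists_surjective_nat M
  let S : ℕ → Finset M := fun n => El ∪ (Finset.range n).image e
  have hS : ∀ a b, ∃ n, a ∈ S n ∧ b ∈ S n := by
    intro a b
    obtain ⟨⟨i, rfl⟩, ⟨j, rfl⟩⟩ := And.intro (he a) (he b)
    exact ⟨max i j + 1, Finset.mem_union_right _ (Finset.mem_image_of_mem e (by simp)),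
      Finset.mem_union_right _ (Finset.mem_image_of_mem e (by simp))⟩
  obtain ⟨α, hα⟩ := exists_eqOn_of_forall_exists_extend (S := fun n => (S n : Set M))
    (fun m n hmn => Finset.coe_subset.2 (Finset.union_subset_union subset_rfl
      (Finset.image_subset_image (Finset.range_mono hmn))))
    (fun a => (hS a a).imp fun _ => And.left) ⟨id, by simpa [S] using h.isGoodMap_id⟩
    (P := fun n f => IsGoodMap El Em t σ (S n) f) fun n f hf => by
      have hSn : S (n + 1) = insert (e n) (S n) := by
        simp only [S, Finset.range_add_one, Finset.image_insert, Finset.union_insert]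
      rw [hSn]
      exact hf.exists_extend hD hM h (e n)
  refine ⟨α, fun a b => ?_⟩
  obtain ⟨n, ha, hb⟩ := hS a b
  obtain ⟨f, hf, hαf⟩ := hα n
  exact ⟨S n, f, hf, ha, hb, hαf⟩

end Amalgamation

theorem statement15 (D : Set ℝ) (hD : IsUniversalDist D) (M : Type) [MetricSpace M]
    (hM : IsUrysohn D M) (El Em : Finset M) (hsub : El ⊆ Em) (s : ℕ)
    (t σ : Fin s → Katetov D M)
    (hdomt : ∀ i, (t i).dom = El) (hdoms : ∀ i, (σ i).dom = Em)
    (hext : ∀ i, ∀ x ∈ El, (σ i).f x = (t i).f x)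
    (hd : ∀ i j, orbDistSet (t i) (t j) = orbDistSet (σ i) (σ j)) :
    ∃ α : M → M, Isometry α ∧ (∀ x ∈ El, α x = x) ∧
      ∀ i, ∀ x ∈ orb (t i), α x ∈ orb (σ i) := by
  classical
  rcases Nat.eq_zero_or_pos s with rfl | hs
  · exact ⟨id, isometry_id, fun _ _ => rfl, fun i => i.elim0⟩
  have : NeZero s := ⟨hs.ne'⟩
  rcases isEmpty_or_nonempty M with hM₀ | hM₀
  · exact ⟨id, isometry_id, fun _ _ => rfl, fun _ x => isEmptyElim x⟩
  have h : IsOrbitExtension El Em t σ := ⟨hsub, hdomt, hdoms, hext, hd⟩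
  obtain ⟨α, hα⟩ := h.exists_eqOn_isGoodMap hD hM
  refine ⟨α, Isometry.of_dist_eq fun a b => ?_, fun x hx => ?_, fun i x hx => ?_⟩
  · obtain ⟨S, f, hf, ha, hb, hαf⟩ := hα a b
    rw [hαf ha, hαf hb, hf.dist_eq a ha b hb]
  · obtain ⟨S, f, hf, hxS, -, hαf⟩ := hα x x
    rw [hαf hxS, hf.map_eq_self x hx]
  · obtain ⟨S, f, hf, hxS, -, hαf⟩ := hα x x
    exact hαf hxS ▸ hf.mem_orb x hxS i hx

end Sauer
end

section
/- Let M be a countable Urysohn space with finite distance set D, and t ⊆ s two Katětov functions of M with rank(t) = rank(s). Then there exists an isometric embedding α of M into M fixing dom(t) pointwise with α(orb(t)) ⊆ orb(s). -/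
/-!
Add the points of `dom σ \ dom t` to `t` one at a time; the rank condition guarantees that each
new value `s = σ v` is at least `t x₀` for some `x₀ ∈ dom t`. For one new point `v`, the function
`h` that is `d(·, v)` on `dom t` and `s` on `orb t` is Katětov: two points of `orb t` are at
distance at most `2 t x₀ ≤ 2 s`. Universality of `D` makes `a ⊕ b = max {d ∈ D | d ≤ a + b}`
associative, so `y ↦ min_z (h z ⊕ d(y, z))` extends `h` to a `D`-valued Katětov function `g` on
all of `M`. Adjoining to `M` a point at distance `g` from everything gives a countable `D`-metric
space, which embeds into `M` over `dom t ∪ {v}` by the extension property of the Urysohn space;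
on `M` this embedding fixes `dom t` and maps `orb t` into the orbit of `t ∪ {v ↦ s}`.
-/

namespace Sauer

variable {D : Set ℝ} {M : Type} [MetricSpace M]

open Set Function

theorem IsUniversalDist.nonneg (hD : IsUniversalDist D) {a : ℝ} (ha : a ∈ D) : 0 ≤ a :=
  hD.2.2.1 a ha

/-- The largest element of `D` below `a + b`: the operation `a ⊕ b` of the paper. -/
noncomputable def oplus (D : Set ℝ) (a b : ℝ) : ℝ := sSup {d | d ∈ D ∧ d ≤ a + b}

section Oplus

variable {a b c d : ℝ}

theorem le_oplus (hD : IsUniversalDist D) (hd : d ∈ D) (h : d ≤ a + b) : d ≤ oplus D a b :=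
  le_csSup (hD.1.subset fun _ he => he.1).bddAbove ⟨hd, h⟩

theorem oplus_mem_and_le_add (hD : IsUniversalDist D) (ha : a ∈ D) (hb : b ∈ D) :
    oplus D a b ∈ D ∧ oplus D a b ≤ a + b :=
  Set.Nonempty.csSup_mem (s := {d | d ∈ D ∧ d ≤ a + b})
    ⟨0, hD.2.1, by linarith [hD.nonneg ha, hD.nonneg hb]⟩ (hD.1.subset fun _ he => he.1)

theorem oplus_mem (hD : IsUniversalDist D) (ha : a ∈ D) (hb : b ∈ D) : oplus D a b ∈ D :=
  (oplus_mem_and_le_add hD ha hb).1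

theorem oplus_le_add (hD : IsUniversalDist D) (ha : a ∈ D) (hb : b ∈ D) :
    oplus D a b ≤ a + b :=
  (oplus_mem_and_le_add hD ha hb).2

theorem oplus_comm (D : Set ℝ) (a b : ℝ) : oplus D a b = oplus D b a := by
  rw [oplus, oplus, add_comm]

theorem left_le_oplus (hD : IsUniversalDist D) (ha : a ∈ D) (hb : b ∈ D) : a ≤ oplus D a b :=
  le_oplus hD ha (by linarith [hD.nonneg hb])

theorem oplus_le_oplus_left (hD : IsUniversalDist D) (ha : a ∈ D) (hb : b ∈ D) {b' : ℝ}
    (h : b ≤ b') : oplus D a b ≤ oplus D a b' :=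
  le_oplus hD (oplus_mem hD ha hb) ((oplus_le_add hD ha hb).trans (by linarith))

theorem oplus_le_oplus_right (hD : IsUniversalDist D) (ha : a ∈ D) (hb : b ∈ D) {a' : ℝ}
    (h : a ≤ a') : oplus D a b ≤ oplus D a' b := by
  rw [oplus_comm, oplus_comm D a']
  exact oplus_le_oplus_left hD hb ha h

theorem oplus_zero (hD : IsUniversalDist D) (ha : a ∈ D) : oplus D a 0 = a :=
  le_antisymm ((oplus_le_add hD ha hD.2.1).trans_eq (add_zero a)) (le_oplus hD ha (by simp))

theorem zero_oplus (hD : IsUniversalDist D) (ha : a ∈ D) : oplus D 0 a = a := by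
  rw [oplus_comm, oplus_zero hD ha]

-- The one use of universality of `D`: the four-values condition produces `p ≤ a ⊕ b` with
-- `a ⊕ (b ⊕ c) ≤ p + c`.
theorem oplus_oplus_le_of_pos (hD : IsUniversalDist D) (ha : a ∈ D) (hb : b ∈ D) (hc : c ∈ D)
    (ha₀ : 0 < a) (hb₀ : 0 < b) (hc₀ : 0 < c) :
    oplus D a (oplus D b c) ≤ oplus D (oplus D a b) c := by
  set u := oplus D b c
  set w := oplus D a u
  have hu : u ∈ D := oplus_mem hD hb hc
  have hbu : b ≤ u := left_le_oplus hD hb hc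
  have hcu : c ≤ u := (left_le_oplus hD hc hb).trans_eq (oplus_comm D c b)
  have huw : u ≤ w := (left_le_oplus hD hu ha).trans_eq (oplus_comm D u a)
  have hw : w ∈ D := oplus_mem hD ha hu
  have hule := oplus_le_add hD hb hc
  have hwle := oplus_le_add hD ha hu
  have haw : a ≤ w := left_le_oplus hD ha hu
  obtain ⟨p, hp, -, ⟨-, -, hpab⟩, ⟨hwp, -, -⟩⟩ :=
    hD.2.2.2 u a w b c hu ha hw hb hc ha₀ (ha₀.trans_le haw) hb₀ hc₀
      ⟨by linarith, by linarith, by linarith⟩ ⟨by linarith, by linarith, by linarith⟩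
  have : p ≤ oplus D a b := le_oplus hD hp hpab
  exact le_oplus hD hw (by linarith)

theorem oplus_assoc (hD : IsUniversalDist D) (ha : a ∈ D) (hb : b ∈ D) (hc : c ∈ D) :
    oplus D a (oplus D b c) = oplus D (oplus D a b) c := by
  rcases (hD.nonneg ha).eq_or_lt with rfl | ha₀
  · rw [zero_oplus hD (oplus_mem hD hb hc), zero_oplus hD hb]
  rcases (hD.nonneg hb).eq_or_lt with rfl | hb₀
  · rw [zero_oplus hD hc, oplus_zero hD ha]
  rcases (hD.nonneg hc).eq_or_lt with rfl | hc₀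
  · rw [oplus_zero hD hb, oplus_zero hD (oplus_mem hD ha hb)]
  refine le_antisymm (oplus_oplus_le_of_pos hD ha hb hc ha₀ hb₀ hc₀) ?_
  calc oplus D (oplus D a b) c = oplus D c (oplus D b a) := by
        rw [oplus_comm D a b, oplus_comm]
    _ ≤ oplus D (oplus D c b) a := oplus_oplus_le_of_pos hD hc hb ha hc₀ hb₀ ha₀
    _ = oplus D a (oplus D b c) := by rw [oplus_comm D c b, oplus_comm]

theorem dist_le_oplus (hD : IsUniversalDist D) (hdist : ∀ x y : M, dist x y ∈ D) (x y z : M) :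
    dist x z ≤ oplus D (dist x y) (dist y z) :=
  le_oplus hD (hdist x z) (dist_triangle x y z)

end Oplus

structure IsKatetovOn (D : Set ℝ) (h : M → ℝ) (A : Set M) : Prop where
  mem : ∀ x ∈ A, h x ∈ D
  pos : ∀ x ∈ A, 0 < h x
  abs_sub_le : ∀ x ∈ A, ∀ y ∈ A, |h x - h y| ≤ dist x y
  dist_le : ∀ x ∈ A, ∀ y ∈ A, dist x y ≤ h x + h y

section KatetovOn

variable {h h' : M → ℝ} {A B : Set M}

theorem IsKatetovOn.congr (hh : IsKatetovOn D h A) (heq : EqOn h h' A) : IsKatetovOn D h' A where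
  mem x hx := heq hx ▸ hh.mem x hx
  pos x hx := heq hx ▸ hh.pos x hx
  abs_sub_le x hx y hy := by rw [← heq hx, ← heq hy]; exact hh.abs_sub_le x hx y hy
  dist_le x hx y hy := by rw [← heq hx, ← heq hy]; exact hh.dist_le x hx y hy

theorem IsKatetovOn.union (hA : IsKatetovOn D h A) (hB : IsKatetovOn D h B)
    (habs : ∀ a ∈ A, ∀ b ∈ B, |h a - h b| ≤ dist a b)
    (hle : ∀ a ∈ A, ∀ b ∈ B, dist a b ≤ h a + h b) : IsKatetovOn D h (A ∪ B) where
  mem x hx := hx.elim (hA.mem x) (hB.mem x)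
  pos x hx := hx.elim (hA.pos x) (hB.pos x)
  abs_sub_le := by
    rintro x (hx | hx) y (hy | hy)
    · exact hA.abs_sub_le x hx y hy
    · exact habs x hx y hy
    · rw [abs_sub_comm, dist_comm]; exact habs y hy x hx
    · exact hB.abs_sub_le x hx y hy
  dist_le := by
    rintro x (hx | hx) y (hy | hy)
    · exact hA.dist_le x hx y hy
    · exact hle x hx y hy
    · rw [add_comm, dist_comm]; exact hle y hy x hx
    · exact hB.dist_le x hx y hy

theorem isKatetovOn_dist (hdist : ∀ x y : M, dist x y ∈ D) {v : M} (hv : v ∉ A) :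
    IsKatetovOn D (dist · v) A where
  mem x _ := hdist x v
  pos x hx := dist_pos.2 fun hxv => hv (hxv ▸ hx)
  abs_sub_le x _ y _ := abs_dist_sub_le x y v
  dist_le x _ y _ := (dist_triangle x v y).trans_eq (by rw [dist_comm v y])

end KatetovOn

-- For nonempty `A` the infimum is attained: it ranges over a subset of the finite set `D`.
noncomputable def katetovExtension (D : Set ℝ) (h : M → ℝ) (A : Set M) (y : M) : ℝ :=
  sInf ((fun z => oplus D (h z) (dist y z)) '' A)

section KatetovExtension

variable {h : M → ℝ} {A : Set M}

theorem finite_image_oplus_dist (hD : IsUniversalDist D) (hdist : ∀ x y : M, dist x y ∈ D)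
    (hh : ∀ z ∈ A, h z ∈ D) (y : M) : ((fun z => oplus D (h z) (dist y z)) '' A).Finite :=
  hD.1.subset (image_subset_iff.2 fun z hz => oplus_mem hD (hh z hz) (hdist y z))

theorem katetovExtension_le (hD : IsUniversalDist D) (hdist : ∀ x y : M, dist x y ∈ D)
    (hh : ∀ z ∈ A, h z ∈ D) (y : M) {z : M} (hz : z ∈ A) :
    katetovExtension D h A y ≤ oplus D (h z) (dist y z) :=
  csInf_le (finite_image_oplus_dist hD hdist hh y).bddBelow (mem_image_of_mem _ hz)

theorem exists_katetovExtension_eq (hD : IsUniversalDist D) (hdist : ∀ x y : M, dist x y ∈ D)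
    (hh : ∀ z ∈ A, h z ∈ D) (hA : A.Nonempty) (y : M) :
    ∃ z ∈ A, katetovExtension D h A y = oplus D (h z) (dist y z) := by
  obtain ⟨z, hz, hzy⟩ := (hA.image _).csInf_mem (finite_image_oplus_dist hD hdist hh y)
  exact ⟨z, hz, hzy.symm⟩

theorem katetovExtension_mem (hD : IsUniversalDist D) (hdist : ∀ x y : M, dist x y ∈ D)
    (hh : ∀ z ∈ A, h z ∈ D) (hA : A.Nonempty) (y : M) : katetovExtension D h A y ∈ D := by
  obtain ⟨z, hz, hzy⟩ := exists_katetovExtension_eq hD hdist hh hA y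
  exact hzy ▸ oplus_mem hD (hh z hz) (hdist y z)

theorem katetovExtension_le_oplus_dist (hD : IsUniversalDist D)
    (hdist : ∀ x y : M, dist x y ∈ D) (hh : ∀ z ∈ A, h z ∈ D) (hA : A.Nonempty) (y y' : M) :
    katetovExtension D h A y ≤ oplus D (katetovExtension D h A y') (dist y y') := by
  obtain ⟨z, hz, hzy'⟩ := exists_katetovExtension_eq hD hdist hh hA y'
  calc katetovExtension D h A y ≤ oplus D (h z) (dist y z) := katetovExtension_le hD hdist hh y hz
    _ ≤ oplus D (h z) (oplus D (dist y' z) (dist y y')) := by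
        refine oplus_le_oplus_left hD (hh z hz) (hdist y z) ?_
        rw [oplus_comm]
        exact dist_le_oplus hD hdist y y' z
    _ = oplus D (katetovExtension D h A y') (dist y y') := by
        rw [oplus_assoc hD (hh z hz) (hdist y' z) (hdist y y'), hzy']

theorem dist_le_oplus_katetovExtension_of_mem (hD : IsUniversalDist D)
    (hdist : ∀ x y : M, dist x y ∈ D) (hh : IsKatetovOn D h A) (hA : A.Nonempty) (y : M)
    {z' : M} (hz' : z' ∈ A) : dist y z' ≤ oplus D (katetovExtension D h A y) (h z') := by
  obtain ⟨z, hz, hzy⟩ := exists_katetovExtension_eq hD hdist hh.mem hA y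
  calc dist y z' ≤ oplus D (dist y z) (dist z z') := dist_le_oplus hD hdist y z z'
    _ ≤ oplus D (dist y z) (oplus D (h z) (h z')) :=
        oplus_le_oplus_left hD (hdist y z) (hdist z z')
          (le_oplus hD (hdist z z') (hh.dist_le z hz z' hz'))
    _ = oplus D (katetovExtension D h A y) (h z') := by
        rw [oplus_assoc hD (hdist y z) (hh.mem z hz) (hh.mem z' hz'), oplus_comm D (dist y z),
          hzy]

theorem dist_le_oplus_katetovExtension (hD : IsUniversalDist D)
    (hdist : ∀ x y : M, dist x y ∈ D) (hh : IsKatetovOn D h A) (hA : A.Nonempty) (y y' : M) :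
    dist y y' ≤ oplus D (katetovExtension D h A y) (katetovExtension D h A y') := by
  obtain ⟨z', hz', hzy'⟩ := exists_katetovExtension_eq hD hdist hh.mem hA y'
  have hgy := katetovExtension_mem hD hdist hh.mem hA y
  calc dist y y' ≤ oplus D (dist y z') (dist z' y') := dist_le_oplus hD hdist y z' y'
    _ ≤ oplus D (oplus D (katetovExtension D h A y) (h z')) (dist z' y') :=
        oplus_le_oplus_right hD (hdist y z') (hdist z' y')
          (dist_le_oplus_katetovExtension_of_mem hD hdist hh hA y hz')
    _ = oplus D (katetovExtension D h A y) (katetovExtension D h A y') := by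
        rw [← oplus_assoc hD hgy (hh.mem z' hz') (hdist z' y'), hzy', dist_comm]

theorem isKatetovOn_katetovExtension (hD : IsUniversalDist D) (hdist : ∀ x y : M, dist x y ∈ D)
    (hh : IsKatetovOn D h A) (hA : A.Nonempty) : IsKatetovOn D (katetovExtension D h A) univ := by
  have hmem := katetovExtension_mem hD hdist hh.mem hA
  have hle (y y' : M) : katetovExtension D h A y ≤ katetovExtension D h A y' + dist y y' :=
    (katetovExtension_le_oplus_dist hD hdist hh.mem hA y y').trans
      (oplus_le_add hD (hmem y') (hdist y y'))
  refine ⟨fun y _ => hmem y, fun y _ => ?_, fun y _ y' _ => ?_, fun y _ y' _ => ?_⟩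
  · obtain ⟨z, hz, hzy⟩ := exists_katetovExtension_eq hD hdist hh.mem hA y
    exact (hh.pos z hz).trans_le (hzy ▸ left_le_oplus hD (hh.mem z hz) (hdist y z))
  · rw [abs_sub_le_iff]
    constructor
    · linarith [hle y y']
    · linarith [hle y' y, dist_comm y y']
  · exact (dist_le_oplus_katetovExtension hD hdist hh hA y y').trans
      (oplus_le_add hD (hmem y) (hmem y'))

theorem katetovExtension_eqOn (hD : IsUniversalDist D) (hdist : ∀ x y : M, dist x y ∈ D)
    (hh : IsKatetovOn D h A) (hA : A.Nonempty) : EqOn (katetovExtension D h A) h A := by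
  intro z hz
  refine le_antisymm ?_ ?_
  · calc katetovExtension D h A z ≤ oplus D (h z) (dist z z) :=
          katetovExtension_le hD hdist hh.mem z hz
      _ = h z := by rw [dist_self, oplus_zero hD (hh.mem z hz)]
  · obtain ⟨w, hw, hwz⟩ := exists_katetovExtension_eq hD hdist hh.mem hA z
    rw [hwz]
    refine le_oplus hD (hh.mem z hz) ?_
    linarith [(abs_sub_le_iff.1 (hh.abs_sub_le z hz w hw)).1]

end KatetovExtension

section OnePointExtension

variable (g : M → ℝ)

-- `none` is a new point at distance `g x` from each `x`.
def katetovDist : Option M → Option M → ℝ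
  | none, none => 0
  | none, some y => g y
  | some x, none => g x
  | some x, some y => dist x y

variable {g}

abbrev katetovMetricSpace (hpos : ∀ x, 0 < g x) (habs : ∀ x y, |g x - g y| ≤ dist x y)
    (hle : ∀ x y, dist x y ≤ g x + g y) : MetricSpace (Option M) where
  dist := katetovDist g
  dist_self := by rintro (_ | x) <;> simp [katetovDist]
  dist_comm := by rintro (_ | x) (_ | y) <;> simp [katetovDist, dist_comm]
  dist_triangle := by
    rintro (_ | x) (_ | y) (_ | z) <;> simp only [katetovDist]
    · exact le_of_eq (add_zero 0).symm
    · linarith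
    · linarith [hpos y]
    · linarith [(abs_sub_le_iff.1 (habs z y)).1, dist_comm y z]
    · linarith
    · exact hle x z
    · linarith [(abs_sub_le_iff.1 (habs x y)).1]
    · exact dist_triangle x y z
  eq_of_dist_eq_zero := by
    rintro (_ | x) (_ | y) h <;> simp only [katetovDist] at h
    · rfl
    · exact absurd h (hpos y).ne'
    · exact absurd h (hpos x).ne'
    · rw [dist_eq_zero.1 h]
  edist_dist _ _ := rfl

end OnePointExtension

section Urysohn

variable {X Y : Type} [MetricSpace X] [MetricSpace Y]

theorem injOn_of_dist_eq {ψ : X → Y} {S : Set X}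
    (hψ : ∀ a ∈ S, ∀ b ∈ S, dist (ψ a) (ψ b) = dist a b) : InjOn ψ S :=
  fun a ha b hb hab => dist_eq_zero.1 (by rw [← hψ a ha b hb, hab, dist_self])

theorem eqOn_update_of_dist_eq [DecidableEq X] {ψ : X → Y} {S : Set X} {x : X} {q : Y}
    (hq : ∀ a ∈ S, dist q (ψ a) = dist x a) : EqOn (update ψ x q) ψ S := by
  intro a ha
  by_cases hax : a = x
  · subst hax
    rw [update_self, ← dist_eq_zero, hq a ha, dist_self]
  · exact update_of_ne hax q ψ

theorem dist_update_eq [DecidableEq X] {ψ : X → Y} {S : Set X}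
    (hψ : ∀ a ∈ S, ∀ b ∈ S, dist (ψ a) (ψ b) = dist a b) {x : X} {q : Y}
    (hq : ∀ a ∈ S, dist q (ψ a) = dist x a) :
    ∀ a ∈ insert x S, ∀ b ∈ insert x S, dist (update ψ x q a) (update ψ x q b) = dist a b := by
  have hS := eqOn_update_of_dist_eq hq
  rintro a (rfl | ha) b (rfl | hb)
  · simp
  · rw [update_self, hS hb, hq b hb]
  · rw [update_self, hS ha, dist_comm, hq a ha, dist_comm]
  · rw [hS ha, hS hb, hψ a ha b hb]

-- Embed `insert x A` into `M` by universality, then move the copy of `A` onto `φ '' A` by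
-- homogeneity.
theorem IsUrysohn.exists_dist_eq (hM : IsUrysohn D M) (hX : ∀ x y : X, dist x y ∈ D)
    {A : Finset X} {φ : X → M} (hφ : ∀ a ∈ A, ∀ b ∈ A, dist (φ a) (φ b) = dist a b) (x : X) :
    ∃ q : M, ∀ a ∈ A, dist q (φ a) = dist x a := by
  classical
  have : Nonempty X := ⟨x⟩
  obtain ⟨f, hf⟩ := hM.2.2.2 (↥(insert x A)) inferInstance fun a b => hX a b
  let F : X → M := fun y => if hy : y ∈ insert x A then f ⟨y, hy⟩ else φ y
  have hF : ∀ a ∈ insert x A, ∀ b ∈ insert x A, dist (F a) (F b) = dist a b := by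
    intro a ha b hb
    simp only [F, dif_pos ha, dif_pos hb]
    exact hf.dist_eq _ _
  have hinv := (injOn_of_dist_eq hφ).leftInvOn_invFunOn
  obtain ⟨g, hg⟩ := hM.2.2.1 (A.image φ) (F ∘ invFunOn φ A) <| by
    simp only [Finset.forall_mem_image, comp_apply]
    intro a ha b hb
    rw [hinv ha, hinv hb, hF a (Finset.mem_insert_of_mem ha) b (Finset.mem_insert_of_mem hb),
      hφ a ha b hb]
  refine ⟨g.symm (F x), fun a ha => ?_⟩
  rw [← g.dist_eq, g.apply_symm_apply, hg _ (Finset.mem_image_of_mem φ ha), comp_apply, hinv ha,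
    hF x (Finset.mem_insert_self x A) a (Finset.mem_insert_of_mem ha)]

theorem IsUrysohn.exists_isometry_eqOn [Countable X] (hM : IsUrysohn D M)
    (hX : ∀ x y : X, dist x y ∈ D) {A : Finset X} {φ : X → M}
    (hφ : ∀ a ∈ A, ∀ b ∈ A, dist (φ a) (φ b) = dist a b) :
    ∃ α : X → M, Isometry α ∧ ∀ a ∈ A, α a = φ a := by
  classical
  rcases isEmpty_or_nonempty X with hXe | hXne
  · exact ⟨isEmptyElim, fun x => isEmptyElim x, fun a => isEmptyElim a⟩
  obtain ⟨e, he⟩ := exists_surjective_nat X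
  let S : ℕ → Finset X := fun n => A ∪ (Finset.range n).image e
  have hS (n : ℕ) : S (n + 1) = insert (e n) (S n) := by
    simp only [S, Finset.range_add_one, Finset.image_insert, Finset.union_insert]
  have hSmono : Monotone S := monotone_nat_of_le_succ fun n => hS n ▸ Finset.subset_insert _ _
  let next (n : ℕ) (ψ : X → M) : X → M := update ψ (e n)
    (if hq : ∃ q, ∀ a ∈ S n, dist q (ψ a) = dist (e n) a then hq.choose else ψ (e n))
  let Φ (n : ℕ) : X → M := Nat.rec (motive := fun _ => X → M) φ next n
  have hnext (n : ℕ) (hn : ∀ a ∈ S n, ∀ b ∈ S n, dist (Φ n a) (Φ n b) = dist a b) :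
      EqOn (Φ (n + 1)) (Φ n) (S n) ∧
        ∀ a ∈ S (n + 1), ∀ b ∈ S (n + 1), dist (Φ (n + 1) a) (Φ (n + 1) b) = dist a b := by
    have hq : ∃ q, ∀ a ∈ S n, dist q (Φ n a) = dist (e n) a := hM.exists_dist_eq hX hn (e n)
    have hchoose := hq.choose_spec
    have hΦ : Φ (n + 1) = update (Φ n) (e n) hq.choose := by simp only [Φ, next, dif_pos hq]
    have hupd := dist_update_eq hn hchoose
    rw [← Finset.coe_insert] at hupd
    rw [hΦ, hS]
    exact ⟨eqOn_update_of_dist_eq hchoose, hupd⟩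
  have hiso (n : ℕ) : ∀ a ∈ S n, ∀ b ∈ S n, dist (Φ n a) (Φ n b) = dist a b := by
    induction n with
    | zero =>
      intro a ha b hb
      exact hφ a (by simpa [S] using ha) b (by simpa [S] using hb)
    | succ n ih => exact (hnext n ih).2
  have hstable {n m : ℕ} (hnm : n ≤ m) : EqOn (Φ m) (Φ n) (S n) := by
    induction m, hnm using Nat.le_induction with
    | base => exact fun _ _ => rfl
    | succ m hnm ih => exact fun a ha => ((hnext m (hiso m)).1 (hSmono hnm ha)).trans (ih ha)
  have hmemS (y : X) : ∃ n, y ∈ S n := by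
    obtain ⟨k, rfl⟩ := he y
    exact ⟨k + 1, by simp [hS]⟩
  choose N hN using hmemS
  refine ⟨fun y => Φ (N y) y, Isometry.of_dist_eq fun y y' => ?_, fun a ha => ?_⟩
  · rw [← hstable (le_max_left (N y) (N y')) (hN y),
      ← hstable (le_max_right (N y) (N y')) (hN y')]
    exact hiso _ y (hSmono (le_max_left _ _) (hN y)) y' (hSmono (le_max_right _ _) (hN y'))
  · exact hstable (Nat.zero_le _) (Finset.subset_union_left ha)

end Urysohn

theorem mem_orb_iff {t : Katetov D M} {y : M} : y ∈ orb t ↔ ∀ x ∈ t.dom, dist y x = t.f x := by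
  refine ⟨fun hy => hy.2, fun hy => ⟨fun hyt => ?_, hy⟩⟩
  have hyy := hy y hyt
  rw [dist_self] at hyy
  exact (t.pos y hyt).ne hyy

theorem orb_subset_orb {s t : Katetov D M} (hdom : s.dom ⊆ t.dom)
    (hf : ∀ x ∈ s.dom, s.f x = t.f x) : orb t ⊆ orb s := fun _ hy =>
  mem_orb_iff.2 fun x hx => (hy.2 x (hdom hx)).trans (hf x hx).symm

theorem rank_le_of_mem (t : Katetov D M) {x : M} (hx : x ∈ t.dom) : rank t ≤ t.f x :=
  csInf_le (t.dom.finite_toSet.image _).bddBelow (mem_image_of_mem _ hx)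

theorem exists_eq_rank (t : Katetov D M) (ht : t.dom.Nonempty) : ∃ x ∈ t.dom, t.f x = rank t :=
  (ht.to_set.image _).csInf_mem (t.dom.finite_toSet.image _)

def Katetov.restrict (σ : Katetov D M) (B : Finset M) (hB : B ⊆ σ.dom) : Katetov D M where
  dom := B
  f := σ.f
  mem x hx := σ.mem x (hB hx)
  pos x hx := σ.pos x (hB hx)
  ineq1 x hx y hy := σ.ineq1 x (hB hx) y (hB hy)
  ineq2 x hx y hy := σ.ineq2 x (hB hx) y (hB hy)

theorem isKatetovOn_dom_union_orb (hdist : ∀ x y : M, dist x y ∈ D) {t t' : Katetov D M} {v : M}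
    (hv : v ∉ t.dom) (hvt' : v ∈ t'.dom) (ht' : t.dom ⊆ t'.dom) (hf : ∀ x ∈ t.dom, t'.f x = t.f x)
    {x₀ : M} (hx₀ : x₀ ∈ t.dom) (hx₀v : t.f x₀ ≤ t'.f v) {h : M → ℝ}
    (hdom : EqOn h (dist · v) t.dom) (horb : EqOn h (fun _ => t'.f v) (orb t)) :
    IsKatetovOn D h (↑t.dom ∪ orb t) := by
  have hconst : IsKatetovOn D (fun _ => t'.f v) (orb t) :=
    ⟨fun _ _ => t'.mem v hvt', fun _ _ => t'.pos v hvt', fun _ _ _ _ => by simp,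
      fun z hz z' hz' => calc
        dist z z' ≤ dist z x₀ + dist x₀ z' := dist_triangle z x₀ z'
        _ = t.f x₀ + t.f x₀ := by rw [hz.2 x₀ hx₀, dist_comm, hz'.2 x₀ hx₀]
        _ ≤ t'.f v + t'.f v := by linarith⟩
  have hcross {z : M} (hz : z ∈ t.dom) :
      |t'.f v - t.f z| ≤ dist z v ∧ dist z v ≤ t'.f v + t.f z := by
    rw [← hf z hz, dist_comm]
    exact ⟨t'.ineq1 v hvt' z (ht' hz), t'.ineq2 v hvt' z (ht' hz)⟩
  refine ((isKatetovOn_dist hdist hv).congr hdom.symm).union (hconst.congr horb.symm)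
    (fun z hz z' hz' => ?_) (fun z hz z' hz' => ?_) <;>
    rw [hdom hz, horb hz', dist_comm z z', hz'.2 z hz] <;>
    obtain ⟨habs, hle⟩ := hcross hz <;>
    rw [abs_sub_le_iff] at habs
  · exact abs_sub_le_iff.2 ⟨by linarith, by linarith⟩
  · linarith

theorem IsUrysohn.exists_isometry_dist_eq (hM : IsUrysohn D M) {g : M → ℝ}
    (hg : IsKatetovOn D g univ) {v : M} {F : Finset M} (hF : ∀ x ∈ F, g x = dist x v) :
    ∃ α : M → M, Isometry α ∧ (∀ x ∈ F, α x = x) ∧ ∀ y, dist (α y) v = g y := by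
  classical
  let _ : MetricSpace (Option M) := katetovMetricSpace (fun x => hg.pos x trivial)
    (fun x y => hg.abs_sub_le x trivial y trivial) (fun x y => hg.dist_le x trivial y trivial)
  have : Countable M := hM.1
  have hdistX : ∀ o o' : Option M, dist o o' ∈ D := by
    rintro (_ | x) (_ | y)
    exacts [by simpa using hM.2.1 v v, hg.mem y trivial, hg.mem x trivial, hM.2.1 x y]
  have hφ : ∀ a ∈ insert none (F.image some), ∀ b ∈ insert none (F.image some),
      dist (a.elim v id) (b.elim v id) = dist a b := by
    simp only [Finset.mem_insert, Finset.mem_image]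
    rintro _ (rfl | ⟨x, hx, rfl⟩) _ (rfl | ⟨y, hy, rfl⟩)
    exacts [dist_self v, (dist_comm v y).trans (hF y hy).symm, (hF x hx).symm, rfl]
  obtain ⟨β, hβ, hβφ⟩ := hM.exists_isometry_eqOn hdistX hφ
  have hβv : β none = v := hβφ none (Finset.mem_insert_self _ _)
  refine ⟨β ∘ some, hβ.comp (Isometry.of_dist_eq fun _ _ => rfl),
    fun x hx => hβφ (some x) (by simp [hx]), fun y => ?_⟩
  rw [comp_apply, ← hβv]
  exact hβ.dist_eq (some y) none

theorem exists_isometry_mapsTo_orb_insert (hD : IsUniversalDist D) (hM : IsUrysohn D M)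
    {t t' : Katetov D M} {v : M} (hv : v ∉ t.dom) (hdom : (t'.dom : Set M) = insert v ↑t.dom)
    (hf : ∀ x ∈ t.dom, t'.f x = t.f x) {x₀ : M} (hx₀ : x₀ ∈ t.dom) (hx₀v : t.f x₀ ≤ t'.f v) :
    ∃ α : M → M, Isometry α ∧ (∀ x ∈ t.dom, α x = x) ∧ MapsTo α (orb t) (orb t') := by
  classical
  have hvt' : v ∈ t'.dom := by rw [← Finset.mem_coe, hdom]; exact mem_insert v _
  have ht' : t.dom ⊆ t'.dom := fun x hx => by
    rw [← Finset.mem_coe, hdom]; exact mem_insert_of_mem v hx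
  let h : M → ℝ := fun z => if z ∈ t.dom then dist z v else t'.f v
  have hh : IsKatetovOn D h (↑t.dom ∪ orb t) := isKatetovOn_dom_union_orb hM.2.1 hv hvt' ht' hf
    hx₀ hx₀v (fun z hz => if_pos hz) (fun z hz => if_neg hz.1)
  have hne : (↑t.dom ∪ orb t).Nonempty := ⟨x₀, Or.inl hx₀⟩
  obtain ⟨g, hg, hgh⟩ : ∃ g, IsKatetovOn D g univ ∧ EqOn g h (↑t.dom ∪ orb t) :=
    ⟨_, isKatetovOn_katetovExtension hD hM.2.1 hh hne, katetovExtension_eqOn hD hM.2.1 hh hne⟩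
  obtain ⟨α, hα, hαfix, hαv⟩ :=
    hM.exists_isometry_dist_eq hg (F := t.dom) fun x hx => (hgh (Or.inl hx)).trans (if_pos hx)
  refine ⟨α, hα, hαfix, fun y hy => mem_orb_iff.2 fun x hx => ?_⟩
  rcases hdom ▸ Finset.mem_coe.2 hx with rfl | hx
  · rw [hαv, hgh (Or.inr hy)]
    exact if_neg hy.1
  · calc dist (α y) x = dist (α y) (α x) := by rw [hαfix x hx]
      _ = t'.f x := by rw [hα.dist_eq, hy.2 x hx, hf x hx]

theorem exists_isometry_mapsTo_orb (hD : IsUniversalDist D) (hM : IsUrysohn D M)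
    {t σ : Katetov D M} (hsub : t.dom ⊆ σ.dom) (hext : ∀ x ∈ t.dom, σ.f x = t.f x)
    (hmin : ∀ v ∈ σ.dom, ∃ x ∈ t.dom, t.f x ≤ σ.f v) :
    ∃ α : M → M, Isometry α ∧ (∀ x ∈ t.dom, α x = x) ∧ MapsTo α (orb t) (orb σ) := by
  classical
  suffices ∀ E : Finset M, ∀ t : Katetov D M, σ.dom \ t.dom = E → t.dom ⊆ σ.dom →
      (∀ x ∈ t.dom, σ.f x = t.f x) → (∀ v ∈ σ.dom, ∃ x ∈ t.dom, t.f x ≤ σ.f v) →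
      ∃ α : M → M, Isometry α ∧ (∀ x ∈ t.dom, α x = x) ∧ MapsTo α (orb t) (orb σ) from
    this _ t rfl hsub hext hmin
  intro E
  induction E using Finset.induction_on with
  | empty =>
    intro t hE _ hext _
    have hσt : σ.dom ⊆ t.dom := Finset.sdiff_eq_empty_iff_subset.1 hE
    exact ⟨id, isometry_id, fun _ _ => rfl, orb_subset_orb hσt fun x hx => hext x (hσt hx)⟩
  | insert v E hvE ih =>
    intro t hE hsub hext hmin
    obtain ⟨hvσ, hvt⟩ := Finset.mem_sdiff.1 (hE ▸ Finset.mem_insert_self v E)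
    let t' := σ.restrict (insert v t.dom) (Finset.insert_subset hvσ hsub)
    have ht' {x : M} (hx : x ∈ t.dom) : x ∈ t'.dom := Finset.mem_insert_of_mem hx
    obtain ⟨x₀, hx₀, hx₀v⟩ := hmin v hvσ
    obtain ⟨α, hα, hαfix, hαorb⟩ := exists_isometry_mapsTo_orb_insert hD hM (t' := t') hvt
      (Finset.coe_insert v t.dom) hext hx₀ hx₀v
    obtain ⟨β, hβ, hβfix, hβorb⟩ := ih t'
      (show σ.dom \ insert v t.dom = E by rw [Finset.sdiff_insert, hE, Finset.erase_insert hvE])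
      (Finset.insert_subset hvσ hsub)
      (fun _ _ => rfl) fun w hw => by
        obtain ⟨x, hx, hxw⟩ := hmin w hw
        exact ⟨x, ht' hx, (hext x hx).trans_le hxw⟩
    exact ⟨β ∘ α, hβ.comp hα, fun x hx => by simp [hαfix x hx, hβfix x (ht' hx)],
      hβorb.comp hαorb⟩

theorem statement16 (D : Set ℝ) (hD : IsUniversalDist D) (M : Type) [MetricSpace M]
    (hM : IsUrysohn D M) (t σ : Katetov D M) (hsub : t.dom ⊆ σ.dom)
    (hext : ∀ x ∈ t.dom, σ.f x = t.f x) (hrank : rank t = rank σ) :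
    ∃ α : M → M, Isometry α ∧ (∀ x ∈ t.dom, α x = x) ∧
      ∀ x ∈ orb t, α x ∈ orb σ := by
  refine exists_isometry_mapsTo_orb hD hM hsub hext fun v hv => ?_
  obtain ⟨w, hw, hwσ⟩ := exists_eq_rank σ ⟨v, hv⟩
  have ht : t.dom.Nonempty := by
    refine Finset.nonempty_iff_ne_empty.2 fun ht => ?_
    have hpos := σ.pos w hw
    rw [hwσ, ← hrank, rank, ht, Finset.coe_empty, image_empty, Real.sInf_empty] at hpos
    exact lt_irrefl 0 hpos
  obtain ⟨x, hx, hxt⟩ := exists_eq_rank t ht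
  exact ⟨x, hx, by rw [hxt, hrank]; exact rank_le_of_mem σ hv⟩

end Sauer
end

section
/- Let D be a finite universal distance set with at least two blocks, let m be the maximum of the first block, let M be the countable Urysohn space with distance set D, and let ~ be the equivalence relation d(x,y) ≤ m. Fix a ∈ M and let C = M \ {x ∈ M : d(a,x) < m}. Then the subspace induced on C is isometric to M. -/
/-!
A back-and-forth argument between `M` and `C = M \ ball a m`, growing finite partial isometries.
Going back is homogeneity of `M`: a finite partial isometry extends to an isometry `g` of `M`,
and `g⁻¹` sends the new point of `C` to a suitable point of `M`. Going forth, `g` sends the new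
point `x` of `M` to a point `y` with the right distances, but `y` may lie in the ball. In that
case the Katětov function `dist y` on the (finite) image, extended by the value `m` at `a`, is
still Katětov because the image lies outside the ball; a realisation of it lies on the sphere
of radius `m` about `a`, hence in `C`.
-/

namespace Sauer

variable {D : Set ℝ} {M : Type} [MetricSpace M]

open Metric

section

variable (X Y : Type*) [PseudoMetricSpace X] [PseudoMetricSpace Y]

def PartialIsometry : Type _ :=
  {f : Finset (X × Y) // ∀ p ∈ f, ∀ q ∈ f, dist p.2 q.2 = dist p.1 q.1}

instance : Preorder (PartialIsometry X Y) := Subtype.preorder _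

instance : Inhabited (PartialIsometry X Y) := ⟨⟨∅, by simp⟩⟩

end

namespace PartialIsometry

variable {X Y : Type*}

section

variable [PseudoMetricSpace X] [PseudoMetricSpace Y]

open scoped Classical

noncomputable def insert (f : PartialIsometry X Y) (x : X) (y : Y)
    (h : ∀ p ∈ f.1, dist y p.2 = dist x p.1) : PartialIsometry X Y :=
  ⟨Insert.insert (x, y) f.1, by
    rintro p hp q hq
    rw [Finset.mem_insert] at hp hq
    rcases hp with rfl | hp <;> rcases hq with rfl | hq
    · simp
    · exact h q hq
    · rw [dist_comm, h p hp, dist_comm]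
    · exact f.2 p hp q hq⟩

theorem le_insert (f : PartialIsometry X Y) (x : X) (y : Y)
    (h : ∀ p ∈ f.1, dist y p.2 = dist x p.1) : f ≤ f.insert x y h :=
  Finset.subset_insert (x, y) f.1

variable
  (forth : ∀ (f : PartialIsometry X Y) (x : X), ∃ y : Y, ∀ p ∈ f.1, dist y p.2 = dist x p.1)
  (back : ∀ (f : PartialIsometry X Y) (y : Y), ∃ x : X, ∀ p ∈ f.1, dist y p.2 = dist x p.1)

def definedAt : X ⊕ Y → Order.Cofinal (PartialIsometry X Y)
  | .inl x =>
    { carrier := {f | ∃ y, (x, y) ∈ f.1}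
      isCofinal := fun f => by
        obtain ⟨y, hy⟩ := forth f x
        exact ⟨f.insert x y hy, ⟨y, Finset.mem_insert_self (x, y) f.1⟩, f.le_insert x y hy⟩ }
  | .inr y =>
    { carrier := {f | ∃ x, (x, y) ∈ f.1}
      isCofinal := fun f => by
        obtain ⟨x, hx⟩ := back f y
        exact ⟨f.insert x y hx, ⟨x, Finset.mem_insert_self (x, y) f.1⟩, f.le_insert x y hx⟩ }

end

theorem nonempty_isometryEquiv [MetricSpace X] [MetricSpace Y] [Countable X] [Countable Y]
    (forth : ∀ (f : PartialIsometry X Y) (x : X), ∃ y : Y, ∀ p ∈ f.1, dist y p.2 = dist x p.1)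
    (back : ∀ (f : PartialIsometry X Y) (y : Y), ∃ x : X, ∀ p ∈ f.1, dist y p.2 = dist x p.1) :
    Nonempty (X ≃ᵢ Y) := by
  cases nonempty_encodable X
  cases nonempty_encodable Y
  let I := Order.idealOfCofinals default (definedAt forth back)
  have hI : ∀ {p q : X × Y}, (∃ f ∈ I, p ∈ f.1) → (∃ g ∈ I, q ∈ g.1) →
      dist p.2 q.2 = dist p.1 q.1 := by
    rintro p q ⟨f, hf, hp⟩ ⟨g, hg, hq⟩
    obtain ⟨k, -, hfk, hgk⟩ := I.directed f hf g hg
    exact k.2 p (hfk hp) q (hgk hq)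
  have hleft : ∀ x, ∃ y, ∃ f ∈ I, (x, y) ∈ f.1 := fun x => by
    obtain ⟨f, ⟨y, hy⟩, hf⟩ := Order.cofinal_meets_idealOfCofinals default
      (definedAt forth back) (Sum.inl x)
    exact ⟨y, f, hf, hy⟩
  have hright : ∀ y, ∃ x, ∃ f ∈ I, (x, y) ∈ f.1 := fun y => by
    obtain ⟨f, ⟨x, hx⟩, hf⟩ := Order.cofinal_meets_idealOfCofinals default
      (definedAt forth back) (Sum.inr y)
    exact ⟨x, f, hf, hx⟩
  choose F hF using hleft
  choose G hG using hright
  exact ⟨{ toFun := F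
           invFun := G
           left_inv := fun x => dist_eq_zero.1 ((hI (hG (F x)) (hF x)).symm.trans (dist_self _))
           right_inv := fun y => dist_eq_zero.1 ((hI (hF (G y)) (hG y)).trans (dist_self _))
           isometry_toFun := Isometry.of_dist_eq fun x x' => hI (hF x) (hF x') }⟩

end PartialIsometry

theorem IsHomogeneous.exists_isometryEquiv_apply_eq (hM : IsHomogeneous M) {ι : Type*} [Finite ι]
    (u v : ι → M) (huv : ∀ i j, dist (v i) (v j) = dist (u i) (u j)) :
    ∃ g : M ≃ᵢ M, ∀ i, g (u i) = v i := by
  classical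
  have := Fintype.ofFinite ι
  have hext : ∀ i, Function.extend u v id (u i) = v i := fun i => by
    have h : ∃ j, u j = u i := ⟨i, rfl⟩
    rw [Function.extend_def, dif_pos h]
    exact dist_eq_zero.1 (by rw [huv, h.choose_spec, dist_self])
  obtain ⟨g, hg⟩ := hM (Finset.univ.image u) (Function.extend u v id) (by
    simp only [Finset.mem_image, Finset.mem_univ, true_and, forall_exists_index,
      forall_apply_eq_imp_iff, hext, huv, implies_true])
  exact ⟨g, fun i => (hg _ (Finset.mem_image_of_mem _ (Finset.mem_univ i))).trans (hext i)⟩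

theorem IsHomogeneous.exists_isometryEquiv_extend (hM : IsHomogeneous M) {Y : Set M}
    (f : PartialIsometry M Y) : ∃ g : M ≃ᵢ M, ∀ p ∈ f.1, g p.1 = p.2 := by
  obtain ⟨g, hg⟩ := hM.exists_isometryEquiv_apply_eq (fun p : f.1 => p.1.1) (fun p => (p.1.2 : M))
    (fun p q => f.2 p.1 p.2 q.1 q.2)
  exact ⟨g, fun p hp => hg ⟨p, hp⟩⟩

theorem IsHomogeneous.back (hM : IsHomogeneous M) {Y : Set M} (f : PartialIsometry M Y) (y : Y) :
    ∃ x : M, ∀ p ∈ f.1, dist y p.2 = dist x p.1 := by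
  obtain ⟨g, hg⟩ := hM.exists_isometryEquiv_extend f
  refine ⟨g.symm y, fun p hp => ?_⟩
  show dist (y : M) p.2 = _
  rw [← g.symm.dist_eq, g.symm_apply_eq.2 (hg p hp).symm]

namespace Katetov

noncomputable def extDist (t : Katetov D M) : Option t.dom → Option t.dom → ℝ
  | none, none => 0
  | none, some x => t.f x
  | some x, none => t.f x
  | some x, some y => dist x.1 y.1

@[reducible]
noncomputable def extMetricSpace (t : Katetov D M) : MetricSpace (Option t.dom) where
  dist := t.extDist
  dist_self := by rintro (_ | x) <;> simp [extDist]
  dist_comm := by rintro (_ | x) (_ | y) <;> simp [extDist, dist_comm]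
  dist_triangle := by
    rintro (_ | x) (_ | y) (_ | z) <;> simp only [extDist]
    · norm_num
    · norm_num
    · linarith [t.pos y.1 y.2]
    · linarith [(abs_le.1 (t.ineq1 y.1 y.2 z.1 z.2)).1]
    · norm_num
    · exact t.ineq2 x.1 x.2 z.1 z.2
    · linarith [(abs_le.1 (t.ineq1 x.1 x.2 y.1 y.2)).2]
    · exact dist_triangle x.1 y.1 z.1
  eq_of_dist_eq_zero := by
    rintro (_ | x) (_ | y) h
    · rfl
    · exact absurd h (t.pos y.1 y.2).ne'
    · exact absurd h (t.pos x.1 x.2).ne'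
    · exact congrArg some (Subtype.ext (dist_eq_zero.1 h))

end Katetov

theorem IsUrysohn.orb_nonempty [Nonempty M] (hM : IsUrysohn D M) (t : Katetov D M) :
    (orb t).Nonempty := by
  obtain ⟨-, hD, hhom, huniv⟩ := hM
  let _ := t.extMetricSpace
  have hdist : ∀ p q : Option t.dom, dist p q = t.extDist p q := fun _ _ => rfl
  obtain ⟨e, he⟩ := huniv (Option t.dom) inferInstance (by
    obtain ⟨z⟩ := ‹Nonempty M›
    rintro (_ | x) (_ | y) <;> rw [hdist, Katetov.extDist]
    · simpa using hD z z
    · exact t.mem y.1 y.2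
    · exact t.mem x.1 x.2
    · exact hD x.1 y.1)
  obtain ⟨g, hg⟩ := hhom.exists_isometryEquiv_apply_eq (fun x => e (some x)) Subtype.val
    fun x y => by rw [he.dist_eq]; rfl
  have hq : ∀ x ∈ t.dom, dist (g (e none)) x = t.f x := fun x hx => calc
    dist (g (e none)) x = dist (g (e none)) (g (e (some ⟨x, hx⟩))) := by rw [hg]
    _ = t.f x := by rw [g.dist_eq, he.dist_eq]; rfl
  exact ⟨g (e none), fun hmem => (t.pos _ hmem).ne' (by rw [← hq _ hmem, dist_self]), hq⟩

theorem IsUrysohn.exists_mem_sphere_forall_dist_eq (hM : IsUrysohn D M) {a y : M} {r : ℝ}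
    (hr : r ∈ D) (S : Finset M) (hS : ∀ s ∈ S, r ≤ dist s a) (hy : dist y a < r) :
    ∃ w ∈ sphere a r, ∀ s ∈ S, dist w s = dist y s := by
  classical
  have : Nonempty M := ⟨a⟩
  have hsa : ∀ s ∈ S, s ≠ a := fun s hs h => by
    have := hS s hs
    rw [h, dist_self] at this
    linarith [dist_nonneg (x := y) (y := a)]
  have hsy : ∀ s ∈ S, y ≠ s := fun s hs h => by linarith [hS s hs, h ▸ hy]
  have hf : ∀ s ∈ S, Function.update (dist y) a r s = dist y s :=
    fun s hs => Function.update_of_ne (hsa s hs) _ _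
  have hsr : ∀ s ∈ S, |r - dist y s| ≤ dist a s := fun s hs => abs_le.2
    ⟨by linarith [dist_triangle y a s, dist_comm y a],
      by linarith [hS s hs, dist_comm s a, dist_nonneg (x := y) (y := s)]⟩
  have hrs : ∀ s ∈ S, dist a s ≤ r + dist y s := fun s hs => by
    linarith [dist_triangle a y s, dist_comm a y]
  let t : Katetov D M :=
    { dom := insert a S
      f := Function.update (dist y) a r
      mem := by
        simp only [Finset.forall_mem_insert, Function.update_self]
        exact ⟨hr, fun s hs => hf s hs ▸ hM.2.1 y s⟩
      pos := by
        simp only [Finset.forall_mem_insert, Function.update_self]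
        exact ⟨dist_nonneg.trans_lt hy, fun s hs => hf s hs ▸ dist_pos.2 (hsy s hs)⟩
      ineq1 := by
        simp only [Finset.forall_mem_insert, Function.update_self, sub_self, abs_zero, dist_self,
          le_refl, true_and]
        refine ⟨fun s hs => hf s hs ▸ hsr s hs, fun s hs => ⟨?_, fun s' hs' => ?_⟩⟩
        · rw [hf s hs, abs_sub_comm, dist_comm s a]
          exact hsr s hs
        · rw [hf s hs, hf s' hs', dist_comm y s, dist_comm y s']
          exact abs_dist_sub_le s s' y
      ineq2 := by
        simp only [Finset.forall_mem_insert, Function.update_self, dist_self]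
        refine ⟨⟨by linarith [dist_nonneg.trans_lt hy], fun s hs => hf s hs ▸ hrs s hs⟩,
          fun s hs => ⟨?_, fun s' hs' => ?_⟩⟩
        · rw [hf s hs, dist_comm, add_comm]
          exact hrs s hs
        · rw [hf s hs, hf s' hs']
          exact dist_triangle_left s s' y }
  obtain ⟨w, -, hw⟩ := hM.orb_nonempty t
  refine ⟨w, ?_, fun s hs => (hw s (Finset.mem_insert_of_mem hs)).trans (hf s hs)⟩
  simpa [t] using hw a (Finset.mem_insert_self a S)

theorem IsUrysohn.forth_compl_ball (hM : IsUrysohn D M) {a : M} {r : ℝ} (hr : r ∈ D)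
    (f : PartialIsometry M ((ball a r)ᶜ : Set M)) (x : M) :
    ∃ y : ↥(ball a r)ᶜ, ∀ p ∈ f.1, dist y p.2 = dist x p.1 := by
  classical
  obtain ⟨g, hg⟩ := hM.2.2.1.exists_isometryEquiv_extend f
  have hgx : ∀ p ∈ f.1, dist (g x) p.2 = dist x p.1 := fun p hp => by
    rw [← hg p hp, g.dist_eq]
  by_cases hx : g x ∈ (ball a r)ᶜ
  · exact ⟨⟨g x, hx⟩, hgx⟩
  obtain ⟨w, hw, hwS⟩ := hM.exists_mem_sphere_forall_dist_eq (a := a) hr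
    (f.1.image fun p => (p.2 : M))
    (Finset.forall_mem_image.2 fun p _ => not_lt.1 (show ¬dist (p.2 : M) a < r from p.2.2))
    (by simpa using hx)
  refine ⟨⟨w, by simp [mem_sphere.1 hw]⟩, fun p hp => ?_⟩
  exact (hwS _ (Finset.mem_image_of_mem _ hp)).trans (hgx p hp)

theorem IsBlock.sSup_mem {B : Set ℝ} (hB : IsBlock D B) : sSup B ∈ D := by
  obtain ⟨n, b, rfl, hbD, -⟩ := hB
  have hfin : {x | ∃ i, i ≤ n ∧ x = b i}.Finite :=
    ((Set.finite_Iic n).image b).subset fun _ ⟨i, hi, hx⟩ => ⟨i, hi, hx.symm⟩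
  have hne : {x | ∃ i, i ≤ n ∧ x = b i}.Nonempty := ⟨b 0, 0, n.zero_le, rfl⟩
  obtain ⟨i, hi, hx⟩ := hne.csSup_mem hfin
  exact hx ▸ hbD i hi

theorem statement18_general (D : Set ℝ)
    (B : Set ℝ) (hB : IsBlock D B)
    (m : ℝ) (hm : m = sSup B)
    (M : Type) [MetricSpace M] (hM : IsUrysohn D M) (a : M)
    (C : Set M) (hC : C = {x : M | ¬ dist a x < m}) :
    ∃ f : M → M, Isometry f ∧ Set.range f = C := by
  have hCball : C = (ball a m)ᶜ := by
    ext x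
    simp [hC, dist_comm]
  have := hM.1
  subst hCball
  obtain ⟨e⟩ := PartialIsometry.nonempty_isometryEquiv (hM.forth_compl_ball (hm ▸ hB.sSup_mem))
    hM.2.2.1.back
  refine ⟨(↑) ∘ e, isometry_subtype_coe.comp e.isometry, ?_⟩
  rw [Set.range_comp, e.range_eq_univ, Set.image_univ, Subtype.range_coe]

theorem statement18 (D : Set ℝ) (hD : IsUniversalDist D)
    (B : Set ℝ) (hB : IsBlock D B) (hfirst : ∀ d ∈ D, 0 < d → sInf B ≤ d)
    (m : ℝ) (hm : m = sSup B) (htwo : ∃ d ∈ D, m < d)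
    (M : Type) [MetricSpace M] (hM : IsUrysohn D M) (a : M)
    (C : Set M) (hC : C = {x : M | ¬ dist a x < m}) :
    ∃ f : M → M, Isometry f ∧ Set.range f = C :=
  statement18_general D B hB m hm M hM a C hC

end Sauer
end
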